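/- (Lemma 4(iii).) Under the stated assumptions, s2 < γ2/γ1 < s1. Equivalently, the cone D1 = {(x1,x2) ∈ (0,∞)² : x1 > s1·x2} is contained in U = {(x1,x2) ∈ (0,∞)² : γ2·x2 < γ1·x1} and the cone D2 = {(x1,x2) ∈ (0,∞)² : x1 < s2·x2} is contained in the complement of U in (0,∞)². -/

import Mathlib

/-!
Let `c = p1 - p2 > 0`, so `κ1' = κ2' + c` and the slope `κ1'/κ2'` equals `r(d) = (d + c)/d` at
`d = κ2'`, a strictly decreasing function of `d < 0`. For the chord slope `m` of `κ2` between its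
value `c γ1` at `-γ1` and its zero `-γ2` one computes `r(m) = γ2/γ1`, and strict convexity gives
`κ2'(-γ1) < m < κ2'(-γ2) < 0`. Hence `s1 = r(κ2'(-γ1)) > γ2/γ1 > r(κ2'(-γ2))`.
-/

open Set

lemma deriv_add_const_mul_id {f : ℝ → ℝ} {x : ℝ} (hf : DifferentiableAt ℝ f x) (c : ℝ) :
    deriv (fun θ => f θ + c * θ) x = deriv f x + c :=
  (hf.hasDerivAt.add ((hasDerivAt_id' x).const_mul c)).deriv.trans (by rw [mul_one])

lemma strictAntiOn_add_div_self {c : ℝ} (hc : 0 < c) :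
    StrictAntiOn (fun d : ℝ => (d + c) / d) (Iio 0) := by
  rintro a (ha : a < 0) b (hb : b < 0) hab
  have hcba : c / b < c / a := by
    simpa only [mul_one_div] using mul_lt_mul_of_pos_left (one_div_lt_one_div_of_neg_of_lt hb hab) hc
  simp only [add_div, div_self ha.ne, div_self hb.ne]
  linarith

lemma StrictConvexOn.deriv_neg_of_eq {S : Set ℝ} {f : ℝ → ℝ} {x y : ℝ}
    (hf : StrictConvexOn ℝ S f) (hx : x ∈ S) (hy : y ∈ S) (hxy : x < y) (hfxy : f x = f y)
    (hd : DifferentiableAt ℝ f x) : deriv f x < 0 := by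
  simpa [slope_def_field, hfxy] using hf.deriv_lt_slope hx hy hxy hd

lemma cone_subset_of_div_lt {a b s : ℝ} (ha : 0 < a) (h : b / a < s) :
    {x : ℝ × ℝ | 0 < x.1 ∧ 0 < x.2 ∧ s * x.2 < x.1} ⊆
      {x | 0 < x.1 ∧ 0 < x.2 ∧ b * x.2 < a * x.1} := by
  rintro x ⟨hx1, hx2, hsx⟩
  have hb : b < s * a := (div_lt_iff₀ ha).mp h
  refine ⟨hx1, hx2, ?_⟩
  nlinarith [mul_lt_mul_of_pos_right hb hx2]

lemma cone_subset_diff_of_lt_div {a b s : ℝ} (ha : 0 < a) (h : s < b / a) :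
    {x : ℝ × ℝ | 0 < x.1 ∧ 0 < x.2 ∧ x.1 < s * x.2} ⊆
      {x | 0 < x.1 ∧ 0 < x.2} \ {x | 0 < x.1 ∧ 0 < x.2 ∧ b * x.2 < a * x.1} := by
  rintro x ⟨hx1, hx2, hxs⟩
  have hb : s * a < b := (lt_div_iff₀ ha).mp h
  refine ⟨⟨hx1, hx2⟩, fun ⟨_, _, hbx⟩ => ?_⟩
  nlinarith [mul_lt_mul_of_pos_right hb hx2]

/-- Lemma 4(iii): `s2 < γ2/γ1 < s1`; equivalently `D1 ⊆ U` and `D2 ⊆ (0,∞)² \ U`,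
where `U = {(x1,x2) : γ2·x2 < γ1·x1}`. -/
theorem cones_and_ray
    (p1 p2 : ℝ) (hp : p2 < p1)
    (κ1 κ2 : ℝ → ℝ)
    (hκ2conv : StrictConvexOn ℝ Set.univ κ2) (hκ2diff : Differentiable ℝ κ2)
    (hκ1 : ∀ θ, κ1 θ = κ2 θ + (p1 - p2) * θ)
    (hκ2zero : κ2 0 = 0)
    (γ1 γ2 : ℝ) (hγ2pos : 0 < γ2) (hγ : γ2 < γ1)
    (hγ1root : κ1 (-γ1) = 0) (hγ2root : κ2 (-γ2) = 0)
    (s1 s2 : ℝ)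
    (hs1 : s1 = deriv κ1 (-γ1) / deriv κ2 (-γ1))
    (hs2 : s2 = max 0 (deriv κ1 (-γ2) / deriv κ2 (-γ2)))
    (D1 D2 U : Set (ℝ × ℝ))
    (hD1 : D1 = {x | 0 < x.1 ∧ 0 < x.2 ∧ s1 * x.2 < x.1})
    (hD2 : D2 = {x | 0 < x.1 ∧ 0 < x.2 ∧ x.1 < s2 * x.2})
    (hU : U = {x | 0 < x.1 ∧ 0 < x.2 ∧ γ2 * x.2 < γ1 * x.1}) :
    s2 < γ2 / γ1 ∧ γ2 / γ1 < s1 ∧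
    D1 ⊆ U ∧ D2 ⊆ {x : ℝ × ℝ | 0 < x.1 ∧ 0 < x.2} \ U := by
  have hγ1pos : 0 < γ1 := hγ2pos.trans hγ
  have hderiv (θ : ℝ) : deriv κ1 θ = deriv κ2 θ + (p1 - p2) := by
    rw [funext hκ1, deriv_add_const_mul_id (hκ2diff θ)]
  set m := slope κ2 (-γ1) (-γ2)
  have hd1m : deriv κ2 (-γ1) < m :=
    hκ2conv.deriv_lt_slope trivial trivial (neg_lt_neg hγ) (hκ2diff _)
  have hmd2 : m < deriv κ2 (-γ2) :=
    hκ2conv.slope_lt_deriv trivial trivial (neg_lt_neg hγ) (hκ2diff _)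
  have hd2 : deriv κ2 (-γ2) < 0 :=
    hκ2conv.deriv_neg_of_eq trivial trivial (by linarith) (hγ2root.trans hκ2zero.symm) (hκ2diff _)
  have hm_ratio : (m + (p1 - p2)) / m = γ2 / γ1 := by
    have hκ2γ1 : κ2 (-γ1) = (p1 - p2) * γ1 := by linarith [hκ1 (-γ1)]
    have hm : m = -((p1 - p2) * γ1) / (γ1 - γ2) := by
      simp only [m, slope_def_field, hγ2root, hκ2γ1]; ring_nf
    rw [hm]
    field_simp [(sub_pos.mpr hp).ne', (sub_pos.mpr hγ).ne', hγ1pos.ne']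
    ring
  have hr := strictAntiOn_add_div_self (sub_pos.mpr hp)
  have hs1_gt : γ2 / γ1 < s1 := by
    rw [hs1, hderiv, ← hm_ratio]
    exact hr (hd1m.trans (hmd2.trans hd2)) (hmd2.trans hd2) hd1m
  have hs2_lt : s2 < γ2 / γ1 := by
    rw [hs2, hderiv]
    exact max_lt (div_pos hγ2pos hγ1pos) (hm_ratio ▸ hr (hmd2.trans hd2) hd2 hmd2)
  subst hD1 hD2 hU
  exact ⟨hs2_lt, hs1_gt, cone_subset_of_div_lt hγ1pos hs1_gt,
    cone_subset_diff_of_lt_div hγ1pos hs2_lt⟩
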